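/- arXiv:1910.04666 — 9 statements merged into one kernel-verified Lean document; each statement's English description precedes it below -/
import Mathlib

section
/- Property P implies property Q: if a family F of m-element sets satisfies that for every k and every F₁,…,F_k ∈ F there exists an index j with |F_j \ ⋃_{i≠j} F_i| ≤ ⌊m/k⌋, then for every k and every F₁,…,F_k ∈ F we have |⋃_{i=1}^k F_i| ≤ Σ_{i=1}^k ⌊m/i⌋. -/
theorem stmt_1 {α : Type*} [DecidableEq α] (m : ℕ)
    (F : Finset (Finset α)) (hcard : ∀ A ∈ F, A.card = m)
    (hP : ∀ k : ℕ, 1 ≤ k → ∀ f : Fin k → Finset α, (∀ i, f i ∈ F) →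
      ∃ j : Fin k, ((f j) \ (Finset.univ.erase j).biUnion f).card ≤ m / k) :
    ∀ k : ℕ, 1 ≤ k → ∀ f : Fin k → Finset α, (∀ i, f i ∈ F) →
      (Finset.univ.biUnion f).card ≤ ∑ i : Fin k, m / (i.1 + 1) := by
  intro k
  induction k with
  | zero => intro h; omega
  | succ k ih =>
    intro _ f hf
    obtain ⟨j, hj⟩ := hP (k+1) (Nat.le_add_left 1 k) f hf
    set X := (Finset.univ.erase j).biUnion f with hX
    have hsub : Finset.univ.biUnion f ⊆ X ∪ (f j \ X) := by
      intro x hx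
      simp only [Finset.mem_biUnion, Finset.mem_univ, true_and] at hx
      obtain ⟨i, hi⟩ := hx
      by_cases hij : i = j
      · subst hij
        by_cases hxX : x ∈ X
        · exact Finset.mem_union_left _ hxX
        · exact Finset.mem_union_right _ (Finset.mem_sdiff.mpr ⟨hi, hxX⟩)
      · exact Finset.mem_union_left _ (Finset.mem_biUnion.mpr
          ⟨i, Finset.mem_erase.mpr ⟨hij, Finset.mem_univ i⟩, hi⟩)
    have hXeq : X = Finset.univ.biUnion (fun t : Fin k => f (j.succAbove t)) := by
      ext x
      simp only [hX, Finset.mem_biUnion, Finset.mem_erase, Finset.mem_univ,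
        true_and, and_true]
      constructor
      · rintro ⟨i, hij, hi⟩
        obtain ⟨t, ht⟩ := Fin.exists_succAbove_eq hij
        exact ⟨t, ht ▸ hi⟩
      · rintro ⟨t, ht⟩
        exact ⟨j.succAbove t, Fin.succAbove_ne j t, ht⟩
    have hXcard : X.card ≤ ∑ i : Fin k, m / (i.1 + 1) := by
      rcases Nat.eq_zero_or_pos k with hk | hk
      · subst hk
        simp [hXeq]
      · rw [hXeq]
        exact ih hk (fun t => f (j.succAbove t)) (fun t => hf _)
    calc (Finset.univ.biUnion f).card ≤ (X ∪ (f j \ X)).card :=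
          Finset.card_le_card hsub
      _ ≤ X.card + (f j \ X).card := Finset.card_union_le _ _
      _ ≤ (∑ i : Fin k, m / (i.1 + 1)) + m / (k+1) := Nat.add_le_add hXcard hj
      _ = ∑ i : Fin (k+1), m / (i.1 + 1) := by
          rw [Fin.sum_univ_castSucc]; simp
end

section
/- An r-uniform family of finite sets containing no k disjointly representable sets has size at most C(r+k-1, k-1). -/
/-!
For each `A ∈ F` take a minimal set `S_A`, disjoint from `A`, meeting every other member of `F`
(it exists because a uniform family is an antichain). By minimality each `x ∈ S_A` lies in a
member of `F` meeting `S_A` only in `x`; these members are disjointly representable, so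
`|S_A| ≤ k - 1`. The pairs `(A, S_A)` satisfy `A ∩ S_A = ∅` and `A ∩ S_B ≠ ∅` for `A ≠ B`, so
Bollobás's inequality `∑ 1 / C(|A| + |S_A|, |A|) ≤ 1` gives `|F| ≤ C(r + k - 1, r)`.
Bollobás's inequality is proved by induction on the ground set `X`: deleting a point `x`
leaves a system formed by the pairs `(A, S_A \ {x})` with `x ∉ A`, and summing the induction
hypothesis over `x ∈ X` counts every pair exactly `|X|` times its weight.
-/

/-- A family `A₁,…,A_k` is disjointly representable if there are elements
`x₁,…,x_k` with `x_i ∈ A_j` iff `i = j`. -/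
def DisjRep {α : Type*} {k : ℕ} (A : Fin k → Finset α) : Prop :=
  ∃ x : Fin k → α, ∀ i j, x i ∈ A j ↔ i = j

open Finset

lemma Nat.add_choose_le_add_choose {a b r t : ℕ} (ha : a ≤ r) (hb : b ≤ t) :
    (a + b).choose a ≤ (r + t).choose r :=
  calc (a + b).choose a = (a + b).choose b := Nat.choose_symm_add
    _ ≤ (r + b).choose b := Nat.choose_le_choose b (by omega)
    _ = (r + b).choose r := Nat.choose_symm_add.symm
    _ ≤ (r + t).choose r := Nat.choose_le_choose r (by omega)

lemma DisjRep.injective {α : Type*} {k : ℕ} {g : Fin k → Finset α} (h : DisjRep g) :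
    Function.Injective g := by
  obtain ⟨x, hx⟩ := h
  intro i j hij
  exact (hx i j).1 (hij ▸ (hx i i).2 rfl)

structure IsSetPairSystem {ι α : Type*} (s : Finset ι) (A B : ι → Finset α) : Prop where
  disjoint : ∀ i ∈ s, Disjoint (A i) (B i)
  not_disjoint : ∀ i ∈ s, ∀ j ∈ s, i ≠ j → ¬Disjoint (A i) (B j)

lemma IsSetPairSystem.nonempty_right {ι α : Type*} {s : Finset ι} {A B : ι → Finset α}
    (h : IsSetPairSystem s A B) (hs : 1 < #s) {i : ι} (hi : i ∈ s) : (B i).Nonempty := by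
  obtain ⟨j, hj, hji⟩ := exists_mem_ne hs i
  exact nonempty_of_ne_empty fun hB ↦ h.not_disjoint j hj i hi hji (hB ▸ disjoint_empty_right _)

section

variable {α : Type*} [DecidableEq α]

lemma sum_sdiff_inv_choose_card_erase {A B X : Finset α} (hAB : Disjoint A B) (hX : A ∪ B ⊆ X)
    (hB : B.Nonempty) :
    ∑ x ∈ X \ A, (((#A + #(B.erase x)).choose #A : ℕ) : ℚ)⁻¹ =
      #X * (((#A + #B).choose #A : ℕ) : ℚ)⁻¹ := by
  obtain ⟨b, hb⟩ : ∃ b, #B = b + 1 := ⟨#B - 1, by have := hB.card_pos; omega⟩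
  have hBX : B ⊆ X \ A := subset_sdiff.2 ⟨subset_union_right.trans hX, hAB.symm⟩
  have hcard : #A + #B ≤ #X := by rw [← card_union_of_disjoint hAB]; exact card_le_card hX
  have hout : ∑ x ∈ (X \ A) \ B, (((#A + #(B.erase x)).choose #A : ℕ) : ℚ)⁻¹ =
      (#X - #A - #B : ℕ) * (((#A + #B).choose #A : ℕ) : ℚ)⁻¹ := by
    rw [sum_congr rfl fun x hx ↦ by rw [erase_eq_of_notMem (mem_sdiff.1 hx).2], sum_const,
      nsmul_eq_mul, card_sdiff_of_subset hBX, card_sdiff_of_subset (subset_union_left.trans hX)]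
  have hin : ∑ x ∈ B, (((#A + #(B.erase x)).choose #A : ℕ) : ℚ)⁻¹ =
      #B * (((#A + (#B - 1)).choose #A : ℕ) : ℚ)⁻¹ := by
    rw [sum_congr rfl fun x hx ↦ by rw [card_erase_of_mem hx], sum_const, nsmul_eq_mul]
  rw [← sum_sdiff hBX, hout, hin, hb, Nat.add_sub_cancel, ← add_assoc]
  rw [hb] at hcard
  have hpos : ((#A + b).choose #A : ℚ) ≠ 0 := by exact_mod_cast (Nat.choose_pos (by omega)).ne'
  have hpos' : ((#A + b + 1).choose #A : ℚ) ≠ 0 := by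
    exact_mod_cast (Nat.choose_pos (by omega)).ne'
  have key : ((#A + b).choose #A : ℚ) * (#A + b + 1) = (#A + b + 1).choose #A * (b + 1) := by
    exact_mod_cast (by rw [Nat.choose_mul_succ_eq, show #A + b + 1 - #A = b + 1 by omega] :
      (#A + b).choose #A * (#A + b + 1) = (#A + b + 1).choose #A * (b + 1))
  field_simp
  push_cast [Nat.cast_sub (show #A ≤ #X by omega), Nat.cast_sub (show b + 1 ≤ #X - #A by omega)]
  linear_combination -key

namespace IsSetPairSystem

variable {ι : Type*} {s : Finset ι} {A B : ι → Finset α}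

lemma erase (h : IsSetPairSystem s A B) (x : α) :
    IsSetPairSystem {i ∈ s | x ∉ A i} A fun i ↦ (B i).erase x where
  disjoint i hi := (h.disjoint i (mem_filter.1 hi).1).mono_right (erase_subset _ _)
  not_disjoint i hi j hj hij := by
    rw [mem_filter] at hi hj
    obtain ⟨y, hyA, hyB⟩ := not_disjoint_iff.1 (h.not_disjoint i hi.1 j hj.1 hij)
    exact not_disjoint_iff.2 ⟨y, hyA, mem_erase.2 ⟨fun hyx ↦ hi.2 (hyx ▸ hyA), hyB⟩⟩

lemma sum_inv_choose_le_one_of_subset {X : Finset α} (h : IsSetPairSystem s A B)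
    (hX : ∀ i ∈ s, A i ∪ B i ⊆ X) :
    ∑ i ∈ s, (((#(A i) + #(B i)).choose #(A i) : ℕ) : ℚ)⁻¹ ≤ 1 := by
  induction X using Finset.strongInduction generalizing s B with | H X ih =>
  by_cases hs : #s ≤ 1
  · calc _ ≤ ∑ _i ∈ s, (1 : ℚ) :=
          sum_le_sum fun i _ ↦ inv_le_one_of_one_le₀ (mod_cast Nat.choose_pos (by omega))
      _ ≤ 1 := by simpa using hs
  -- With two pairs or more every `B i` is nonempty, as the counting identity requires.
  have hB i (hi : i ∈ s) : (B i).Nonempty := h.nonempty_right (by omega) hi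
  obtain ⟨i₀, hi₀⟩ := card_pos.1 (show 0 < #s by omega)
  have hXpos : (0 : ℚ) < #X :=
    mod_cast card_pos.2 ((hB i₀ hi₀).mono (subset_union_right.trans (hX i₀ hi₀)))
  have hdel (x) (hx : x ∈ X) :
      ∑ i ∈ s with x ∉ A i, (((#(A i) + #((B i).erase x)).choose #(A i) : ℕ) : ℚ)⁻¹ ≤ 1 := by
    refine ih _ (erase_ssubset hx) (h.erase x) fun i hi y hy ↦ ?_
    rw [mem_filter] at hi
    rw [mem_union, mem_erase] at hy
    refine mem_erase.2 ⟨?_, hX i hi.1 (mem_union.2 (hy.imp id And.right))⟩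
    rintro rfl
    exact hy.elim hi.2 (·.1 rfl)
  refine le_of_mul_le_mul_left ?_ hXpos
  calc (#X : ℚ) * ∑ i ∈ s, (((#(A i) + #(B i)).choose #(A i) : ℕ) : ℚ)⁻¹
      = ∑ i ∈ s, ∑ x ∈ X \ A i, (((#(A i) + #((B i).erase x)).choose #(A i) : ℕ) : ℚ)⁻¹ := by
        rw [mul_sum]
        exact sum_congr rfl fun i hi ↦
          (sum_sdiff_inv_choose_card_erase (h.disjoint i hi) (hX i hi) (hB i hi)).symm
    _ = ∑ x ∈ X, ∑ i ∈ s with x ∉ A i,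
          (((#(A i) + #((B i).erase x)).choose #(A i) : ℕ) : ℚ)⁻¹ :=
        sum_comm' fun i x ↦ by simp only [mem_sdiff, mem_filter]; tauto
    _ ≤ ∑ _x ∈ X, 1 := sum_le_sum hdel
    _ = #X * 1 := by simp

theorem sum_inv_choose_le_one (h : IsSetPairSystem s A B) :
    ∑ i ∈ s, (((#(A i) + #(B i)).choose #(A i) : ℕ) : ℚ)⁻¹ ≤ 1 :=
  h.sum_inv_choose_le_one_of_subset fun _ hi ↦ subset_biUnion_of_mem (fun i ↦ A i ∪ B i) hi

theorem card_le_choose {r t : ℕ} (h : IsSetPairSystem s A B) (hA : ∀ i ∈ s, #(A i) ≤ r)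
    (hB : ∀ i ∈ s, #(B i) ≤ t) : #s ≤ (r + t).choose r := by
  have hpos : (0 : ℚ) < (r + t).choose r := mod_cast Nat.choose_pos (by omega)
  have : (#s : ℚ) * (((r + t).choose r : ℕ) : ℚ)⁻¹ ≤ 1 :=
    calc (#s : ℚ) * (((r + t).choose r : ℕ) : ℚ)⁻¹
        = ∑ _i ∈ s, (((r + t).choose r : ℕ) : ℚ)⁻¹ := by simp
      _ ≤ ∑ i ∈ s, (((#(A i) + #(B i)).choose #(A i) : ℕ) : ℚ)⁻¹ :=
          sum_le_sum fun i hi ↦ inv_anti₀ (mod_cast Nat.choose_pos (by omega))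
            (mod_cast Nat.add_choose_le_add_choose (hA i hi) (hB i hi))
      _ ≤ 1 := h.sum_inv_choose_le_one
  rw [mul_inv_le_iff₀ hpos, one_mul] at this
  exact_mod_cast this

end IsSetPairSystem

lemma exists_disjRep_of_inter_eq_singleton {F : Finset (Finset α)} {S : Finset α} {k : ℕ}
    (hk : k ≤ #S) (hS : ∀ x ∈ S, ∃ B ∈ F, B ∩ S = {x}) :
    ∃ g : Fin k → Finset α, Function.Injective g ∧ (∀ i, g i ∈ F) ∧ DisjRep g := by
  choose B hBF hBS using hS
  let e : Fin k ↪ S := (Fin.castLEEmb hk).trans S.equivFin.symm.toEmbedding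
  have hrep : DisjRep fun i ↦ B (e i) (e i).2 := ⟨fun i ↦ e i, fun i j ↦ by
    rw [← e.injective.eq_iff, Subtype.ext_iff, ← mem_singleton, ← hBS _ (e j).2, mem_inter,
      and_iff_left (e i).2]⟩
  exact ⟨_, hrep.injective, fun i ↦ hBF _ _, hrep⟩

lemma exists_transversal_card_lt {F : Finset (Finset α)} {k : ℕ}
    (hF : IsAntichain (· ⊆ ·) (F : Set (Finset α)))
    (hDR : ¬∃ g : Fin k → Finset α, Function.Injective g ∧ (∀ i, g i ∈ F) ∧ DisjRep g)
    {A : Finset α} (hA : A ∈ F) :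
    ∃ S, Disjoint A S ∧ #S < k ∧ ∀ B ∈ F, B ≠ A → ¬Disjoint B S := by
  let P (S : Finset α) : Prop := Disjoint A S ∧ ∀ B ∈ F, B ≠ A → ¬Disjoint B S
  have hP : P (F.biUnion id \ A) := by
    refine ⟨disjoint_sdiff, fun B hB hBA ↦ ?_⟩
    obtain ⟨y, hyB, hyA⟩ := not_subset.1 (hF hB hA hBA)
    exact not_disjoint_iff.2 ⟨y, hyB, mem_sdiff.2 ⟨mem_biUnion.2 ⟨B, hB, hyB⟩, hyA⟩⟩
  obtain ⟨S, hS⟩ := exists_minimal_of_wellFoundedLT P ⟨_, hP⟩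
  refine ⟨S, hS.prop.1, ?_, hS.prop.2⟩
  by_contra! hk
  refine hDR (exists_disjRep_of_inter_eq_singleton hk fun x hx ↦ ?_)
  -- By minimality some `B` meets `S` but misses `S.erase x`, so it meets `S` exactly in `x`.
  have hnP := hS.not_prop_of_lt (erase_ssubset hx)
  simp only [P, hS.prop.1.mono_right (erase_subset x S), true_and, not_forall, not_not] at hnP
  obtain ⟨B, hB, hBA, hBx⟩ := hnP
  have hsub : B ∩ S ⊆ {x} := fun y hy ↦ mem_singleton.2 <| by_contra fun hyx ↦
    disjoint_left.1 hBx (mem_inter.1 hy).1 (mem_erase.2 ⟨hyx, (mem_inter.1 hy).2⟩)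
  obtain ⟨y, hy⟩ := not_disjoint_iff_nonempty_inter.1 (hS.prop.2 B hB hBA)
  exact ⟨B, hB, eq_singleton_iff_unique_mem.2 ⟨mem_singleton.1 (hsub hy) ▸ hy,
    fun z hz ↦ mem_singleton.1 (hsub hz)⟩⟩

end

theorem stmt_2 {α : Type*} [DecidableEq α] (r k : ℕ)
    (F : Finset (Finset α)) (hcard : ∀ A ∈ F, A.card = r)
    (hnoDR : ¬ ∃ g : Fin k → Finset α,
      Function.Injective g ∧ (∀ i, g i ∈ F) ∧ DisjRep g) :
    F.card ≤ Nat.choose (r + k - 1) (k - 1) := by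
  have hk : k ≠ 0 := by
    rintro rfl
    exact hnoDR ⟨Fin.elim0, fun i ↦ i.elim0, fun i ↦ i.elim0, Fin.elim0, fun i ↦ i.elim0⟩
  have hF : IsAntichain (· ⊆ ·) (F : Set (Finset α)) := Set.Sized.isAntichain hcard
  choose! S hAS hSk hSB using fun A (hA : A ∈ F) ↦ exists_transversal_card_lt hF hnoDR hA
  have hsys : IsSetPairSystem F id S := ⟨hAS, fun A hA B hB hAB ↦ hSB B hB A hA hAB⟩
  have := hsys.card_le_choose (r := r) (t := k - 1) (fun A hA ↦ (hcard A hA).le)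
    fun A hA ↦ Nat.le_sub_one_of_lt (hSk A hA)
  rwa [Nat.choose_symm_add, show r + (k - 1) = r + k - 1 by omega] at this
end

section
/- Bollobás's inequality: if (A₁,B₁),…,(A_t,B_t) are pairs of finite sets with A_i ∩ B_j = ∅ if and only if i = j, then Σ_{j=1}^t 1 / C(|A_j|+|B_j|, |A_j|) ≤ 1. -/
/-!
Lubell-style double counting, by induction on a ground set `Y` containing all the pairs.
Deleting a point `x` from `Y` turns the pairs `(Aᵢ, Bᵢ \ {x})` with `x ∉ Aᵢ` into a system on
`Y \ {x}`, whose weights sum to at most `1` by induction. Summed over `x ∈ Y`, the weight of a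
fixed pair `(A, B)` with `B ≠ ∅` is counted with total `|Y| / C(|A| + |B|, |A|)`, because of
`|B| / C(a + b - 1, a) = (a + b) / C(a + b, a)`. Hence `|Y| · ∑ᵢ wᵢ ≤ |Y|`.
-/

open Finset

section

variable {ι α : Type*}

noncomputable def pairWeight (A B : Finset α) : ℝ := 1 / ((#A + #B).choose #A)

lemma pairWeight_le_one (A B : Finset α) : pairWeight A B ≤ 1 := by
  have hpos : 0 < (#A + #B).choose #A := Nat.choose_pos (Nat.le_add_right _ _)
  rw [pairWeight, div_le_one (by exact_mod_cast hpos)]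
  exact_mod_cast hpos

variable [DecidableEq α]

lemma pairWeight_erase {A B : Finset α} {x : α} (hx : x ∈ B) :
    pairWeight A (B.erase x) = (#A + #B) / #B * pairWeight A B := by
  obtain ⟨c, hc⟩ : ∃ c, #B = c + 1 := Nat.exists_eq_add_one.2 (card_pos.2 ⟨x, hx⟩)
  have hchoose : ((#A + c).choose #A : ℝ) * (#A + c + 1) = (#A + c + 1).choose #A * (c + 1) := by
    have := Nat.choose_mul_succ_eq (#A + c) #A
    rw [show #A + c + 1 - #A = c + 1 by omega] at this
    exact_mod_cast this
  have hpos : (0 : ℝ) < (#A + c).choose #A := by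
    exact_mod_cast Nat.choose_pos (Nat.le_add_right _ _)
  have hpos' : (0 : ℝ) < (#A + c + 1).choose #A := by
    exact_mod_cast Nat.choose_pos (by omega)
  rw [pairWeight, pairWeight, card_erase_of_mem hx, hc, Nat.add_sub_cancel, ← add_assoc]
  field_simp
  push_cast
  linear_combination -hchoose

lemma sum_pairWeight_erase {A B Y : Finset α} (hAB : Disjoint A B) (hY : A ∪ B ⊆ Y)
    (hB : B.Nonempty) : ∑ x ∈ Y \ A, pairWeight A (B.erase x) = #Y * pairWeight A B := by
  have hBY : B ⊆ Y \ A := subset_sdiff.2 ⟨(union_subset_iff.1 hY).2, hAB.symm⟩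
  have hcard : #((Y \ A) \ B) + #B + #A = #Y := by
    rw [card_sdiff_add_card_eq_card hBY, card_sdiff_add_card_eq_card (union_subset_iff.1 hY).1]
  have hb : (#B : ℝ) ≠ 0 := by exact_mod_cast hB.card_pos.ne'
  rw [← sum_sdiff hBY,
    sum_congr rfl fun x hx => by rw [erase_eq_of_notMem (mem_sdiff.1 hx).2],
    sum_congr rfl fun x hx => pairWeight_erase hx, sum_const, sum_const, nsmul_eq_mul,
    nsmul_eq_mul, ← hcard]
  push_cast
  field_simp
  ring

structure IsSetPairSystem_s5 (s : Finset ι) (A B : ι → Finset α) : Prop where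
  disjoint : ∀ i ∈ s, Disjoint (A i) (B i)
  inter_nonempty : ∀ i ∈ s, ∀ j ∈ s, i ≠ j → (A i ∩ B j).Nonempty

namespace IsSetPairSystem_s5

variable {s : Finset ι} {A B : ι → Finset α}

lemma nonempty_right_s5 (h : IsSetPairSystem_s5 s A B) (hs : 1 < #s) {i : ι} (hi : i ∈ s) :
    (B i).Nonempty := by
  obtain ⟨j, hj, hji⟩ := exists_mem_ne hs i
  obtain ⟨y, hy⟩ := h.inter_nonempty j hj i hi hji
  exact ⟨y, (mem_inter.1 hy).2⟩

lemma filter_erase (h : IsSetPairSystem_s5 s A B) (x : α) :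
    IsSetPairSystem_s5 {i ∈ s | x ∉ A i} A fun i => (B i).erase x where
  disjoint i hi := (h.disjoint i (mem_filter.1 hi).1).mono_right (erase_subset _ _)
  inter_nonempty i hi j hj hij := by
    obtain ⟨hi, hxi⟩ := mem_filter.1 hi
    obtain ⟨y, hy⟩ := h.inter_nonempty i hi j (mem_filter.1 hj).1 hij
    obtain ⟨hyA, hyB⟩ := mem_inter.1 hy
    exact ⟨y, mem_inter.2 ⟨hyA, mem_erase.2 ⟨fun hyx => hxi (hyx ▸ hyA), hyB⟩⟩⟩

lemma sum_pairWeight_le_one_of_subset (h : IsSetPairSystem_s5 s A B) (Y : Finset α)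
    (hY : ∀ i ∈ s, A i ∪ B i ⊆ Y) : ∑ i ∈ s, pairWeight (A i) (B i) ≤ 1 := by
  induction Y using Finset.strongInduction generalizing s B with
  | H Y ih =>
  rcases le_or_gt #s 1 with hs | hs
  · calc ∑ i ∈ s, pairWeight (A i) (B i) ≤ #s • (1 : ℝ) :=
          sum_le_card_nsmul _ _ _ fun i _ => pairWeight_le_one _ _
      _ ≤ 1 := by rw [nsmul_one]; exact_mod_cast hs
  have hB i (hi : i ∈ s) := h.nonempty_right_s5 hs hi
  have hYpos : (0 : ℝ) < #Y := by
    obtain ⟨i, hi⟩ := card_pos.1 (by omega : 0 < #s)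
    exact_mod_cast (hB i hi).card_pos.trans_le (card_le_card (subset_union_right.trans (hY i hi)))
  have hdelete (x : α) (hx : x ∈ Y) :
      ∑ i ∈ s with x ∉ A i, pairWeight (A i) ((B i).erase x) ≤ 1 := by
    refine ih (Y.erase x) (erase_ssubset hx) (h.filter_erase x) fun i hi y hy => ?_
    obtain ⟨hi, hxi⟩ := mem_filter.1 hi
    rcases mem_union.1 hy with hyA | hyB
    · exact mem_erase.2 ⟨fun hyx => hxi (hyx ▸ hyA), hY i hi (mem_union_left _ hyA)⟩
    · exact mem_erase.2 ⟨(mem_erase.1 hyB).1, hY i hi (mem_union_right _ (mem_of_mem_erase hyB))⟩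
  refine le_of_mul_le_mul_left ?_ hYpos
  calc #Y * ∑ i ∈ s, pairWeight (A i) (B i)
      = ∑ i ∈ s, ∑ x ∈ Y \ A i, pairWeight (A i) ((B i).erase x) := by
        rw [mul_sum]
        exact sum_congr rfl fun i hi =>
          (sum_pairWeight_erase (h.disjoint i hi) (hY i hi) (hB i hi)).symm
    _ = ∑ x ∈ Y, ∑ i ∈ s with x ∉ A i, pairWeight (A i) ((B i).erase x) :=
        sum_comm' fun i x => by simp only [mem_sdiff, mem_filter]; tauto
    _ ≤ ∑ _x ∈ Y, 1 := sum_le_sum hdelete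
    _ = #Y * 1 := by simp

theorem sum_pairWeight_le_one (h : IsSetPairSystem_s5 s A B) :
    ∑ i ∈ s, pairWeight (A i) (B i) ≤ 1 :=
  h.sum_pairWeight_le_one_of_subset (s.biUnion fun i => A i ∪ B i) fun _ hi =>
    subset_biUnion_of_mem (fun i => A i ∪ B i) hi

end IsSetPairSystem_s5

end

theorem stmt_5 {α : Type*} [DecidableEq α] (t : ℕ)
    (A B : Fin t → Finset α)
    (h : ∀ i j, A i ∩ B j = ∅ ↔ i = j) :
    ∑ j : Fin t, (1 : ℝ) / (Nat.choose ((A j).card + (B j).card) (A j).card) ≤ 1 :=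
  IsSetPairSystem_s5.sum_pairWeight_le_one
    { disjoint := fun i _ => disjoint_iff_inter_eq_empty.2 ((h i i).2 rfl)
      inter_nonempty := fun i _ j _ hij =>
        nonempty_iff_ne_empty.2 fun hempty => hij ((h i j).1 hempty) }
end

section
/- If (A₁,B₁),…,(A_t,B_t) are pairs of sets with |A_i| ≤ m and |B_i| ≤ m for all i, and A_i ∩ B_j = ∅ if and only if i = j, then t ≤ C(2m, m). -/
namespace Stmt6Aux

open Finset

/-- The permutation of `Fin (a+b)` sending the elements of `T` (in increasing order)
to `0, …, a-1` and the elements of `Tᶜ` (in increasing order) to `a, …, a+b-1`. -/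
noncomputable def rr (a b : ℕ) (T : Finset (Fin (a + b))) (hT : T.card = a) :
    Equiv.Perm (Fin (a + b)) :=
  (((Equiv.sumCongr (T.orderIsoOfFin hT).toEquiv
      (((Tᶜ).orderIsoOfFin (by
          rw [Finset.card_compl, hT, Fintype.card_fin]; omega)).toEquiv.trans
        (Equiv.subtypeEquivRight fun k => Finset.mem_compl))).trans
    (Equiv.sumCompl (· ∈ T))).symm.trans finSumFinEquiv)

lemma sumCompl_symm_pos {n : ℕ} (p : Fin n → Prop) [DecidablePred p] (k : Fin n) (h : p k) :
    (Equiv.sumCompl p).symm k = Sum.inl ⟨k, h⟩ := by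
  rw [Equiv.symm_apply_eq]; rfl

lemma sumCompl_symm_neg {n : ℕ} (p : Fin n → Prop) [DecidablePred p] (k : Fin n) (h : ¬ p k) :
    (Equiv.sumCompl p).symm k = Sum.inr ⟨k, h⟩ := by
  rw [Equiv.symm_apply_eq]; rfl

lemma rr_lt {a b : ℕ} {T : Finset (Fin (a + b))} (hT : T.card = a) {k : Fin (a + b)}
    (hk : k ∈ T) : (rr a b T hT k : ℕ) < a := by
  rw [rr]
  simp only [Equiv.trans_apply, Equiv.symm_trans_apply, Equiv.sumCongr_symm,
    sumCompl_symm_pos (· ∈ T) k hk, Equiv.sumCongr_apply, Sum.map_inl,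
    finSumFinEquiv_apply_left, Fin.coe_castAdd]
  exact Fin.is_lt _

lemma rr_ge {a b : ℕ} {T : Finset (Fin (a + b))} (hT : T.card = a) {k : Fin (a + b)}
    (hk : k ∉ T) : a ≤ (rr a b T hT k : ℕ) := by
  rw [rr]
  simp only [Equiv.trans_apply, Equiv.symm_trans_apply, Equiv.sumCongr_symm,
    sumCompl_symm_neg (· ∈ T) k hk, Equiv.sumCongr_apply, Sum.map_inr,
    finSumFinEquiv_apply_right, Fin.coe_natAdd]
  exact Nat.le_add_right _ _

/-- The permutation of `Fin n` which is identity outside `S`, and permutes `S`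
(indexed in increasing order by `Fin (a+b)`) according to `rr a b T hT`. -/
noncomputable def tau {n : ℕ} (a b : ℕ) (S : Finset (Fin n)) (hS : S.card = a + b)
    (T : Finset (Fin (a + b))) (hT : T.card = a) : Equiv.Perm (Fin n) :=
  (rr a b T hT).extendDomain (p := (· ∈ S)) (S.orderIsoOfFin hS).toEquiv

lemma tau_congr {n a b : ℕ} {S₁ S₂ : Finset (Fin n)} {h₁ : S₁.card = a + b}
    {h₂ : S₂.card = a + b} {T₁ T₂ : Finset (Fin (a + b))} {k₁ : T₁.card = a}
    {k₂ : T₂.card = a} (hS : S₁ = S₂) (hT : T₁ = T₂) :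
    tau a b S₁ h₁ T₁ k₁ = tau a b S₂ h₂ T₂ k₂ := by
  subst hS; subst hT; rfl

lemma tau_apply {n a b : ℕ} (S : Finset (Fin n)) (hS : S.card = a + b)
    (T : Finset (Fin (a + b))) (hT : T.card = a) {x : Fin n} (hx : x ∈ S) :
    tau a b S hS T hT x =
      ↑((S.orderIsoOfFin hS) (rr a b T hT ((S.orderIsoOfFin hS).symm ⟨x, hx⟩))) := by
  conv_lhs => rw [show x = ↑((S.orderIsoOfFin hS).toEquiv
    ((S.orderIsoOfFin hS).toEquiv.symm ⟨x, hx⟩)) by simp]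
  rw [tau, Equiv.Perm.extendDomain_apply_image]
  rfl

lemma tau_mem {n a b : ℕ} (S : Finset (Fin n)) (hS : S.card = a + b)
    (T : Finset (Fin (a + b))) (hT : T.card = a) {x : Fin n} (hx : x ∈ S) :
    tau a b S hS T hT x ∈ S := by
  rw [tau_apply S hS T hT hx]
  exact ((S.orderIsoOfFin hS) _).2

lemma tau_image {n a b : ℕ} (S : Finset (Fin n)) (hS : S.card = a + b)
    (T : Finset (Fin (a + b))) (hT : T.card = a) :
    S.image (tau a b S hS T hT) = S := by
  apply Finset.eq_of_subset_of_card_le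
  · intro y hy
    obtain ⟨x, hx, rfl⟩ := Finset.mem_image.1 hy
    exact tau_mem S hS T hT hx
  · rw [Finset.card_image_of_injective _ (tau a b S hS T hT).injective]

variable {n : ℕ} (A B : Finset (Fin n))

/-- Permutations for which all of `A` comes before all of `B`. -/
def good : Finset (Equiv.Perm (Fin n)) :=
  univ.filter fun σ => ∀ x ∈ A, ∀ y ∈ B, σ x < σ y

lemma key (hd : A ∩ B = ∅) :
    n.factorial ≤ (good A B).card * Nat.choose (A.card + B.card) A.card := by
  classical
  set a := A.card with ha
  set b := B.card with hb
  have hdisj : Disjoint A B := Finset.disjoint_iff_inter_eq_empty.2 hd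
  set Sf : Equiv.Perm (Fin n) → Finset (Fin n) := fun σ => (A ∪ B).image σ with hSfdef
  have hSf : ∀ σ, (Sf σ).card = a + b := fun σ => by
    rw [hSfdef, Finset.card_image_of_injective _ σ.injective,
      Finset.card_union_of_disjoint hdisj]
  set Tf : Equiv.Perm (Fin n) → Finset (Fin (a + b)) := fun σ =>
    univ.filter fun k => ↑((Sf σ).orderIsoOfFin (hSf σ) k) ∈ A.image σ with hTfdef
  have hASf : ∀ σ : Equiv.Perm (Fin n), A.image σ ⊆ Sf σ := fun σ =>
    Finset.image_subset_image Finset.subset_union_left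
  have hTf : ∀ σ, (Tf σ).card = a := by
    intro σ
    have : (Tf σ).card = (A.image σ).card := by
      refine Finset.card_bij' (fun k _ => ↑((Sf σ).orderIsoOfFin (hSf σ) k))
        (fun x hx => ((Sf σ).orderIsoOfFin (hSf σ)).symm ⟨x, hASf σ hx⟩)
        ?_ ?_ ?_ ?_
      case refine_1 =>
        intro k hk
        exact (Finset.mem_filter.1 hk).2
      case refine_2 =>
        intro x hx
        simp only [hTfdef, Finset.mem_filter, Finset.mem_univ, true_and]
        rw [OrderIso.apply_symm_apply]
        exact hx
      case refine_3 =>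
        intro k hk
        exact OrderIso.symm_apply_apply _ _
      case refine_4 =>
        intro x hx
        exact congrArg Subtype.val (OrderIso.apply_symm_apply _ _)
    rw [this, Finset.card_image_of_injective _ σ.injective]
  set F : Equiv.Perm (Fin n) →
      {x // x ∈ good A B} × {s : Finset (Fin (a + b)) // s.card = a} := fun σ =>
    (⟨σ.trans (tau a b (Sf σ) (hSf σ) (Tf σ) (hTf σ)), by
      simp only [good, Finset.mem_filter, Finset.mem_univ, true_and]
      intro x hx y hy
      have hxS : σ x ∈ Sf σ := Finset.mem_image_of_mem σ (Finset.mem_union_left _ hx)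
      have hyS : σ y ∈ Sf σ := Finset.mem_image_of_mem σ (Finset.mem_union_right _ hy)
      rw [Equiv.trans_apply, Equiv.trans_apply,
        tau_apply _ _ _ _ hxS, tau_apply _ _ _ _ hyS]
      set φ := (Sf σ).orderIsoOfFin (hSf σ)
      have hkx : φ.symm ⟨σ x, hxS⟩ ∈ Tf σ := by
        simp only [hTfdef, Finset.mem_filter, Finset.mem_univ, true_and]
        rw [OrderIso.apply_symm_apply]
        exact Finset.mem_image_of_mem σ hx
      have hky : φ.symm ⟨σ y, hyS⟩ ∉ Tf σ := by
        simp only [hTfdef, Finset.mem_filter, Finset.mem_univ, true_and]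
        rw [OrderIso.apply_symm_apply]
        intro hmem
        obtain ⟨x', hx', hx'eq⟩ := Finset.mem_image.1 hmem
        have : x' = y := σ.injective hx'eq
        subst this
        exact Finset.notMem_empty x' (hd ▸ Finset.mem_inter.2 ⟨hx', hy⟩)
      have hlt : rr a b (Tf σ) (hTf σ) (φ.symm ⟨σ x, hxS⟩) <
          rr a b (Tf σ) (hTf σ) (φ.symm ⟨σ y, hyS⟩) := by
        rw [Fin.lt_def]
        exact lt_of_lt_of_le (rr_lt (hTf σ) hkx) (rr_ge (hTf σ) hky)
      exact Subtype.coe_lt_coe.2 (φ.lt_iff_lt.2 hlt)⟩,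
     ⟨Tf σ, hTf σ⟩) with hFdef
  have himg : ∀ σ : Equiv.Perm (Fin n),
      (A ∪ B).image (σ.trans (tau a b (Sf σ) (hSf σ) (Tf σ) (hTf σ))) = Sf σ := by
    intro σ
    rw [Equiv.coe_trans, ← Finset.image_image]
    exact tau_image _ _ _ _
  have hinj : Function.Injective F := by
    intro σ₁ σ₂ heq
    have h1 : σ₁.trans (tau a b (Sf σ₁) (hSf σ₁) (Tf σ₁) (hTf σ₁)) =
        σ₂.trans (tau a b (Sf σ₂) (hSf σ₂) (Tf σ₂) (hTf σ₂)) :=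
      Subtype.ext_iff.1 (Prod.ext_iff.1 heq).1
    have h2 : Tf σ₁ = Tf σ₂ := Subtype.ext_iff.1 (Prod.ext_iff.1 heq).2
    have hSS : Sf σ₁ = Sf σ₂ := by
      rw [← himg σ₁, ← himg σ₂, h1]
    have hττ : tau a b (Sf σ₁) (hSf σ₁) (Tf σ₁) (hTf σ₁) =
        tau a b (Sf σ₂) (hSf σ₂) (Tf σ₂) (hTf σ₂) := tau_congr hSS h2
    calc σ₁ = (σ₁.trans (tau a b (Sf σ₁) (hSf σ₁) (Tf σ₁) (hTf σ₁))).trans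
          (tau a b (Sf σ₁) (hSf σ₁) (Tf σ₁) (hTf σ₁)).symm := by ext x; simp
      _ = (σ₂.trans (tau a b (Sf σ₂) (hSf σ₂) (Tf σ₂) (hTf σ₂))).trans
          (tau a b (Sf σ₂) (hSf σ₂) (Tf σ₂) (hTf σ₂)).symm := by rw [h1, hττ]
      _ = σ₂ := by ext x; simp
  calc n.factorial = Fintype.card (Equiv.Perm (Fin n)) := by
        rw [Fintype.card_perm, Fintype.card_fin]
    _ ≤ Fintype.card ({x // x ∈ good A B} × {s : Finset (Fin (a + b)) // s.card = a}) :=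
        Fintype.card_le_of_injective F hinj
    _ = (good A B).card * Nat.choose (a + b) a := by
        rw [Fintype.card_prod, Fintype.card_coe, Fintype.card_finset_len, Fintype.card_fin]

lemma core (t m : ℕ) (A B : Fin t → Finset (Fin n))
    (hA : ∀ i, (A i).card ≤ m) (hB : ∀ i, (B i).card ≤ m)
    (hd : ∀ i, A i ∩ B i = ∅)
    (hc : ∀ i j, i ≠ j → (A i ∩ B j).Nonempty) :
    t ≤ Nat.choose (2 * m) m := by
  classical
  have hfac : 0 < n.factorial := Nat.factorial_pos n
  have key_i : ∀ i, n.factorial ≤ (good (A i) (B i)).card * Nat.choose (2 * m) m := by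
    intro i
    refine (key (A i) (B i) (hd i)).trans (Nat.mul_le_mul_left _ ?_)
    calc Nat.choose ((A i).card + (B i).card) (A i).card
        ≤ Nat.choose (2 * m) (A i).card :=
          Nat.choose_le_choose _ (by have := hA i; have := hB i; omega)
      _ ≤ Nat.choose (2 * m) m := by
          have h2 := Nat.choose_le_middle (A i).card (2 * m)
          rwa [show 2 * m / 2 = m by omega] at h2
  have hdisj : ∀ i ∈ (univ : Finset (Fin t)), ∀ j ∈ (univ : Finset (Fin t)), i ≠ j →
      Disjoint (good (A i) (B i)) (good (A j) (B j)) := by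
    intro i _ j _ hij
    rw [Finset.disjoint_left]
    intro σ hσi hσj
    obtain ⟨x, hx⟩ := hc i j hij
    obtain ⟨y, hy⟩ := hc j i hij.symm
    have hσi' := (Finset.mem_filter.1 hσi).2
    have hσj' := (Finset.mem_filter.1 hσj).2
    have h1 : σ x < σ y := hσi' x (Finset.mem_inter.1 hx).1 y (Finset.mem_inter.1 hy).2
    have h2 : σ y < σ x := hσj' y (Finset.mem_inter.1 hy).1 x (Finset.mem_inter.1 hx).2
    exact absurd h1 (not_lt_of_gt h2)
  have hsum : ∑ i : Fin t, (good (A i) (B i)).card ≤ n.factorial := by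
    rw [← Finset.card_biUnion hdisj]
    calc ((univ : Finset (Fin t)).biUnion fun i => good (A i) (B i)).card
        ≤ Fintype.card (Equiv.Perm (Fin n)) := Finset.card_le_univ _
      _ = n.factorial := by rw [Fintype.card_perm, Fintype.card_fin]
  have hmain : t * n.factorial ≤ n.factorial * Nat.choose (2 * m) m := by
    calc t * n.factorial = ∑ _i : Fin t, n.factorial := by
          rw [Finset.sum_const, Finset.card_univ, Fintype.card_fin, smul_eq_mul]
      _ ≤ ∑ i : Fin t, (good (A i) (B i)).card * Nat.choose (2 * m) m :=
          Finset.sum_le_sum fun i _ => key_i i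
      _ = (∑ i : Fin t, (good (A i) (B i)).card) * Nat.choose (2 * m) m :=
          (Finset.sum_mul _ _ _).symm
      _ ≤ n.factorial * Nat.choose (2 * m) m := Nat.mul_le_mul_right _ hsum
  exact Nat.le_of_mul_le_mul_right (by rwa [mul_comm n.factorial] at hmain) hfac

end Stmt6Aux

theorem stmt_6 {α : Type*} [DecidableEq α] (t m : ℕ)
    (A B : Fin t → Finset α)
    (hA : ∀ i, (A i).card ≤ m) (hB : ∀ i, (B i).card ≤ m)
    (h : ∀ i j, A i ∩ B j = ∅ ↔ i = j) :
    t ≤ Nat.choose (2 * m) m := by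
  classical
  set X : Finset α := Finset.univ.biUnion (fun i => A i ∪ B i) with hX
  set ψ := X.equivFin with hψ
  have memX : ∀ (i : Fin t) {x : α}, x ∈ A i ∪ B i → x ∈ X := fun i {x} hx =>
    Finset.mem_biUnion.2 ⟨i, Finset.mem_univ i, hx⟩
  set A' : Fin t → Finset (Fin X.card) := fun i =>
    (A i).attach.image (fun x => ψ ⟨x.1, memX i (Finset.mem_union_left _ x.2)⟩) with hA'
  set B' : Fin t → Finset (Fin X.card) := fun i =>
    (B i).attach.image (fun x => ψ ⟨x.1, memX i (Finset.mem_union_right _ x.2)⟩) with hB'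
  have hcardA' : ∀ i, (A' i).card = (A i).card := by
    intro i
    rw [hA', Finset.card_image_of_injective, Finset.card_attach]
    intro x y hxy
    have h2 := ψ.injective hxy
    exact Subtype.ext (Subtype.mk_eq_mk.1 h2)
  have hcardB' : ∀ i, (B' i).card = (B i).card := by
    intro i
    rw [hB', Finset.card_image_of_injective, Finset.card_attach]
    intro x y hxy
    have h2 := ψ.injective hxy
    exact Subtype.ext (Subtype.mk_eq_mk.1 h2)
  apply Stmt6Aux.core t m A' B' (fun i => (hcardA' i).le.trans (hA i))
    (fun i => (hcardB' i).le.trans (hB i))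
  · intro i
    rw [Finset.eq_empty_iff_forall_notMem]
    intro z hz
    obtain ⟨hzA, hzB⟩ := Finset.mem_inter.1 hz
    obtain ⟨x, -, hxe⟩ := Finset.mem_image.1 hzA
    obtain ⟨y, -, hye⟩ := Finset.mem_image.1 hzB
    have hxy : x.1 = y.1 := congrArg Subtype.val (ψ.injective (hxe.trans hye.symm))
    have : x.1 ∈ A i ∩ B i := Finset.mem_inter.2 ⟨x.2, hxy ▸ y.2⟩
    rw [(h i i).2 rfl] at this
    exact Finset.notMem_empty _ this
  · intro i j hij
    have hne : A i ∩ B j ≠ ∅ := fun he => hij ((h i j).1 he)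
    obtain ⟨x, hx⟩ := Finset.nonempty_iff_ne_empty.2 hne
    obtain ⟨hxA, hxB⟩ := Finset.mem_inter.1 hx
    refine ⟨ψ ⟨x, memX i (Finset.mem_union_left _ hxA)⟩, Finset.mem_inter.2 ⟨?_, ?_⟩⟩
    · exact Finset.mem_image.2 ⟨⟨x, hxA⟩, Finset.mem_attach _ _, rfl⟩
    · exact Finset.mem_image.2 ⟨⟨x, hxB⟩, Finset.mem_attach _ _, rfl⟩
end

section
/- Skew Bollobás inequality (Frankl, Kalai): if (A₁,B₁),…,(A_t,B_t) are pairs of m-element sets with A_i ∩ B_i = ∅ for all i and A_i ∩ B_j ≠ ∅ for all i < j, then t ≤ C(2m, m). -/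
/-!
Take `|Aᵢ| ≤ a`, `|Bⱼ| = b` and embed the ground set in a field `K`. The coefficient vector `wᵢ`
of `qᵢ = ∏_{x ∈ Aᵢ} (X - x)` lies in `K^(a+1)`, and the linear form `L_y = ∑ₖ yᵏ Xₖ` satisfies
`L_y(wᵢ) = qᵢ(y)`, so the degree-`b` form `Pⱼ = ∏_{y ∈ Bⱼ} L_y` vanishes at `wᵢ` exactly when `Aᵢ`
meets `Bⱼ`. The matrix `(Pⱼ(wᵢ))` is therefore triangular with nonzero diagonal, the `Pⱼ` are
linearly independent, and there are at most `C(a+b, b)` of them, the dimension of the space of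
forms of degree `b` in `a + 1` variables.
-/

open Finset MvPolynomial

theorem linearIndependent_of_eval_triangular {ι R V : Type*} [Fintype ι] [LinearOrder ι]
    [CommRing R] [NoZeroDivisors R] [AddCommGroup V] [Module R V] {v : ι → V}
    (f : ι → V →ₗ[R] R) (hdiag : ∀ i, f i (v i) ≠ 0) (hlt : ∀ i j, i < j → f i (v j) = 0) :
    LinearIndependent R v := by
  rw [Fintype.linearIndependent_iff]
  intro g hg i
  induction i using WellFoundedLT.induction with
  | ind i ih =>
    have hfi : ∑ j, g j * f i (v j) = 0 := by
      simpa only [map_sum, map_smul, smul_eq_mul, map_zero] using congrArg (f i) hg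
    rw [Finset.sum_eq_single i (fun j _ hji => ?_) (by simp)] at hfi
    · exact (mul_eq_zero.mp hfi).resolve_right (hdiag i)
    · rcases hji.lt_or_gt with hji | hij
      · rw [ih j hji, zero_mul]
      · rw [hlt i j hij, mul_zero]

theorem MvPolynomial.IsHomogeneous.eq_zero_of_coeff_sym_eq_zero {σ R : Type*} [DecidableEq σ]
    [CommSemiring R] {φ : MvPolynomial σ R} {n : ℕ} (hφ : φ.IsHomogeneous n)
    (h : ∀ s : Sym σ n, coeff (Multiset.toFinsupp (s : Multiset σ)) φ = 0) : φ = 0 := by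
  ext d
  rw [coeff_zero]
  by_cases hd : d.degree = n
  · have hcard : Multiset.card (Finsupp.toMultiset d) = n := (Finsupp.card_toMultiset d).trans hd
    simpa [Finsupp.toMultiset_toFinsupp] using h ⟨_, hcard⟩
  · exact hφ.coeff_eq_zero hd

theorem MvPolynomial.card_le_choose_of_linearIndependent {ι σ K : Type*} [Fintype ι]
    [Fintype σ] [DecidableEq σ] [Field K] {P : ι → MvPolynomial σ K} {n : ℕ}
    (hP : LinearIndependent K P) (hhom : ∀ i, (P i).IsHomogeneous n) :
    Fintype.card ι ≤ (Fintype.card σ + n - 1).choose n := by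
  let coeffs : MvPolynomial σ K →ₗ[K] Sym σ n → K :=
    LinearMap.pi fun s => lcoeff K (Multiset.toFinsupp (s : Multiset σ))
  have hspan : Submodule.span K (Set.range P) ≤ homogeneousSubmodule σ K n :=
    Submodule.span_le.mpr (Set.range_subset_iff.mpr hhom)
  have hker : Disjoint (Submodule.span K (Set.range P)) (LinearMap.ker coeffs) := by
    rw [Submodule.disjoint_def]
    intro φ hφ hcoeffs
    exact (hspan hφ).eq_zero_of_coeff_sym_eq_zero fun s => congrFun hcoeffs s
  calc Fintype.card ι ≤ Module.finrank K (Sym σ n → K) := (hP.map hker).fintype_card_le_finrank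
    _ = Fintype.card (Sym σ n) := Module.finrank_fintype_fun_eq_card K
    _ = (Fintype.card σ + n - 1).choose n := Sym.card_sym_eq_choose n

noncomputable def momentForm {R : Type*} [CommSemiring R] (n : ℕ) (x : R) :
    MvPolynomial (Fin (n + 1)) R :=
  ∑ k : Fin (n + 1), C (x ^ (k : ℕ)) * X k

theorem isHomogeneous_momentForm {R : Type*} [CommSemiring R] (n : ℕ) (x : R) :
    (momentForm n x).IsHomogeneous 1 :=
  IsHomogeneous.sum _ _ _ fun k _ => isHomogeneous_C_mul_X _ k

theorem eval_coeff_momentForm {R : Type*} [CommSemiring R] {n : ℕ} {p : Polynomial R}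
    (hp : p.natDegree ≤ n) (x : R) :
    eval (fun k : Fin (n + 1) => p.coeff k) (momentForm n x) = p.eval x := by
  rw [Polynomial.eval_eq_sum_range' (Nat.lt_succ_of_le hp), ← Fin.sum_univ_eq_sum_range,
    momentForm, map_sum]
  simp [mul_comm]

theorem Polynomial.eval_prod_X_sub_C_eq_zero_iff {α K : Type*} [CommRing K] [IsDomain K]
    {r : α → K} (hr : Function.Injective r) (s : Finset α) (y : α) :
    (∏ x ∈ s, (Polynomial.X - Polynomial.C (r x))).eval (r y) = 0 ↔ y ∈ s := by
  simp [Polynomial.eval_prod, Finset.prod_eq_zero_iff, sub_eq_zero, hr.eq_iff]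

theorem card_le_choose_of_skew_crossIntersecting {ι α K : Type*} [Fintype ι] [LinearOrder ι]
    [DecidableEq α] [Field K] {r : α → K} (hr : Function.Injective r) {a b : ℕ}
    (A B : ι → Finset α) (hA : ∀ i, #(A i) ≤ a) (hB : ∀ i, #(B i) = b)
    (hdisj : ∀ i, Disjoint (A i) (B i)) (hskew : ∀ i j, i < j → (A i ∩ B j).Nonempty) :
    Fintype.card ι ≤ (a + b).choose b := by
  let q : ι → Polynomial K := fun i => ∏ x ∈ A i, (Polynomial.X - Polynomial.C (r x))
  have hq : ∀ i, (q i).natDegree ≤ a := fun i => by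
    simpa only [q, Polynomial.natDegree_finsetProd_X_sub_C_eq_card] using hA i
  let w : ι → Fin (a + 1) → K := fun i k => (q i).coeff k
  let P : ι → MvPolynomial (Fin (a + 1)) K := fun j => ∏ y ∈ B j, momentForm a (r y)
  have hP : ∀ j, (P j).IsHomogeneous b := fun j => by
    simpa [hB j] using IsHomogeneous.prod (B j) _ _ fun y _ => isHomogeneous_momentForm a (r y)
  have heval : ∀ i j, eval (w i) (P j) = 0 ↔ (A i ∩ B j).Nonempty := fun i j => by
    simp only [P, w, map_prod, eval_coeff_momentForm (hq i), Finset.prod_eq_zero_iff, q,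
      Polynomial.eval_prod_X_sub_C_eq_zero_iff hr, Finset.Nonempty, Finset.mem_inter, and_comm]
  have hind : LinearIndependent K P :=
    linearIndependent_of_eval_triangular (fun i => (aeval (w i)).toLinearMap)
      (fun i => by simpa [heval, Finset.not_nonempty_iff_eq_empty,
        ← Finset.disjoint_iff_inter_eq_empty] using hdisj i)
      (fun i j hij => by simpa [heval] using hskew i j hij)
  simpa [add_comm] using card_le_choose_of_linearIndependent hind hP

theorem stmt_7 {α : Type*} [DecidableEq α] (t m : ℕ)
    (A B : Fin t → Finset α)
    (hA : ∀ i, (A i).card = m) (hB : ∀ i, (B i).card = m)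
    (hdisj : ∀ i, A i ∩ B i = ∅)
    (hskew : ∀ i j : Fin t, i < j → (A i ∩ B j).Nonempty) :
    t ≤ Nat.choose (2 * m) m := by
  have hr : Function.Injective fun x : α =>
      algebraMap (MvPolynomial α ℚ) (FractionRing (MvPolynomial α ℚ)) (X x) :=
    (IsFractionRing.injective _ _).comp X_injective
  simpa [two_mul] using card_le_choose_of_skew_crossIntersecting hr A B (fun i => (hA i).le) hB
    (fun i => Finset.disjoint_iff_inter_eq_empty.mpr (hdisj i)) hskew
end

section
/- The family of all m-element subsets of a ground set of size ⌊3m/2⌋ has property Q; consequently h(m) ≥ C(⌊3m/2⌋, m). -/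
theorem stmt_10 (m : ℕ) (hm : 1 ≤ m) :
    (∀ k : ℕ, 1 ≤ k → ∀ f : Fin k → Finset ℕ,
      (∀ i, f i ∈ (Finset.range (3 * m / 2)).powersetCard m) →
      (Finset.univ.biUnion f).card ≤ ∑ i : Fin k, m / (i.1 + 1)) ∧
    ((Finset.range (3 * m / 2)).powersetCard m).card = Nat.choose (3 * m / 2) m := by
  constructor
  · intro k hk f hf
    have hsub : Finset.univ.biUnion f ⊆ Finset.range (3 * m / 2) := by
      intro x hx
      obtain ⟨i, _, hi⟩ := Finset.mem_biUnion.1 hx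
      exact (Finset.mem_powersetCard.1 (hf i)).1 hi
    rcases Nat.lt_or_ge k 2 with h2 | h2
    · have hk1 : k = 1 := by omega
      subst hk1
      have he : Finset.univ.biUnion f = f 0 := by
        simp
      rw [he]
      have := (Finset.mem_powersetCard.1 (hf 0)).2
      simp [this]
    · have hcard := Finset.card_le_card hsub
      rw [Finset.card_range] at hcard
      have hsum : ∑ i : Fin k, m / (i.1 + 1) = ∑ i ∈ Finset.range k, m / (i + 1) :=
        Fin.sum_univ_eq_sum_range (fun i => m / (i + 1)) k
      have hsub2 : Finset.range 2 ⊆ Finset.range k := Finset.range_subset_range.2 h2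
      have h1 : ∑ i ∈ Finset.range 2, m / (i + 1) ≤ ∑ i ∈ Finset.range k, m / (i + 1) :=
        Finset.sum_le_sum_of_subset hsub2
      have h0 : ∑ i ∈ Finset.range 2, m / (i + 1) = m + m / 2 := by
        simp [Finset.sum_range_succ]
      have h3 : 3 * m / 2 = m + m / 2 := by omega
      omega
  · simp [Finset.card_powersetCard, Finset.card_range]
end

section
/- For all sufficiently large m, if ℓ is the largest integer with ℓ^ℓ ≤ m and X is an integer with X ≥ ℓ², then C(X, ℓ) · C(2m − X + ℓ, m) < C(2m − ℓ + 4, m). -/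
lemma aux_pow4 : ∀ n : ℕ, 16 ≤ n → n^4 ≤ 2^n := by
  intro n hn
  induction n with
  | zero => omega
  | succ k ih =>
    rcases Nat.lt_or_ge k 16 with h | h
    · have hk : k = 15 := by omega
      subst hk; norm_num
    · have hk := ih (by omega)
      have h1 : 16 * k ≤ k^2 := by nlinarith
      have h2 : 16 * k^2 ≤ k^3 := by nlinarith
      have h3 : 16 * k^3 ≤ k^4 := by nlinarith
      have : (k+1)^4 ≤ 2 * k^4 := by nlinarith
      calc (k+1)^4 ≤ 2 * k^4 := this
        _ ≤ 2 * 2^k := by omega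
        _ = 2^(k+1) := by ring

lemma aux_double (m N : ℕ) (h1 : m ≤ N) (h2 : N + 1 ≤ 2 * m) :
    2 * N.choose m ≤ (N+1).choose m := by
  have key := Nat.choose_mul_succ_eq N m
  have hpos : 0 < N + 1 - m := by omega
  have h : 2 * N.choose m * (N + 1 - m) ≤ (N+1).choose m * (N + 1 - m) := by
    calc 2 * N.choose m * (N + 1 - m) = N.choose m * (2 * (N + 1 - m)) := by ring
      _ ≤ N.choose m * (N + 1) := Nat.mul_le_mul_left _ (by omega)
      _ = (N+1).choose m * (N + 1 - m) := key
  exact Nat.le_of_mul_le_mul_right h hpos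

lemma aux_doubles (m N : ℕ) (h1 : m ≤ N) : ∀ j : ℕ, N + j ≤ 2 * m →
    2^j * N.choose m ≤ (N + j).choose m := by
  intro j
  induction j with
  | zero => simp
  | succ k ih =>
    intro hj
    have hk := ih (by omega)
    calc 2^(k+1) * N.choose m = 2 * (2^k * N.choose m) := by ring
      _ ≤ 2 * (N + k).choose m := Nat.mul_le_mul_left _ hk
      _ ≤ (N + k + 1).choose m := aux_double m (N+k) (by omega) (by omega)
      _ = (N + (k+1)).choose m := by ring_nf

lemma aux_step (m ℓ Y : ℕ) (hℓ : 2 ≤ ℓ) (hY1 : ℓ^2 ≤ Y) (hY2 : Y + 1 ≤ m + ℓ) :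
    (Y+1).choose ℓ * (2*m + ℓ - (Y+1)).choose m ≤ Y.choose ℓ * (2*m + ℓ - Y).choose m := by
  have hℓY : ℓ ≤ Y := by nlinarith
  have hℓm : ℓ ≤ m := by nlinarith [hY2, hY1]
  obtain ⟨N, hNval⟩ : ∃ N, 2*m + ℓ - Y = N := ⟨_, rfl⟩
  have hNm : m + 1 ≤ N := by omega
  have h2mY : 2*m + ℓ - (Y+1) = N - 1 := by omega
  rw [hNval, h2mY]
  have harith : (Y+1) * (N - m) ≤ (Y + 1 - ℓ) * N := by
    have hNz : (N:ℤ) = 2*m + ℓ - Y := by omega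
    zify [show m ≤ N by omega, show ℓ ≤ Y + 1 by omega]
    have hi1 : (ℓ:ℤ) ≤ (Y:ℤ) + 1 - ℓ := by
      have h : (ℓ:ℤ)^2 ≤ Y := by exact_mod_cast hY1
      nlinarith [show (2:ℤ) ≤ ℓ by exact_mod_cast hℓ]
    have hi2 : (m:ℤ) + ℓ - Y ≤ m := by
      have h : (ℓ:ℤ) ≤ Y := by exact_mod_cast hℓY
      linarith
    have hi3 : (0:ℤ) ≤ ℓ := by positivity
    have hi4 : (0:ℤ) ≤ m := by positivity
    have hp : ((m:ℤ) + ℓ - Y) * ℓ ≤ (m:ℤ) * ((Y:ℤ) + 1 - ℓ) := by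
      rcases le_or_gt ((m:ℤ) + ℓ - Y) 0 with h0 | h0
      · nlinarith
      · exact mul_le_mul hi2 hi1 hi3 hi4
    nlinarith [hp, hNz]
  have hsub : N - 1 + 1 = N := by omega
  have key1 := Nat.choose_mul_succ_eq Y ℓ
  have key2 := Nat.choose_mul_succ_eq (N-1) m
  rw [hsub] at key2
  have hpos : 0 < (Y + 1 - ℓ) * N := by
    have h1 : 0 < Y + 1 - ℓ := by omega
    have h2 : 0 < N := by omega
    exact Nat.mul_pos h1 h2
  have h := calc
    (Y+1).choose ℓ * (N-1).choose m * ((Y + 1 - ℓ) * N)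
        = ((Y+1).choose ℓ * (Y + 1 - ℓ)) * ((N-1).choose m * N) := by ring
    _ = (Y.choose ℓ * (Y+1)) * (N.choose m * (N - m)) := by rw [← key1, ← key2]
    _ = (Y.choose ℓ * N.choose m) * ((Y+1) * (N - m)) := by ring
    _ ≤ (Y.choose ℓ * N.choose m) * ((Y + 1 - ℓ) * N) := Nat.mul_le_mul_left _ harith
    _ = Y.choose ℓ * N.choose m * ((Y + 1 - ℓ) * N) := rfl
  exact Nat.le_of_mul_le_mul_right h hpos

lemma aux_mono (m ℓ : ℕ) (hℓ : 2 ≤ ℓ) : ∀ i, ℓ^2 + i ≤ m + ℓ →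
    (ℓ^2 + i).choose ℓ * (2*m + ℓ - (ℓ^2+i)).choose m ≤
      (ℓ^2).choose ℓ * (2*m + ℓ - ℓ^2).choose m := by
  intro i
  induction i with
  | zero => simp
  | succ k ih =>
    intro h
    have h1 : ℓ^2 + (k+1) = (ℓ^2 + k) + 1 := by omega
    rw [h1]
    calc ((ℓ^2+k)+1).choose ℓ * (2*m + ℓ - ((ℓ^2+k)+1)).choose m
        ≤ (ℓ^2+k).choose ℓ * (2*m + ℓ - (ℓ^2+k)).choose m :=
          aux_step m ℓ (ℓ^2+k) hℓ (by omega) (by omega)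
      _ ≤ (ℓ^2).choose ℓ * (2*m + ℓ - ℓ^2).choose m := ih (by omega)

lemma aux_exp (ℓ : ℕ) (h : 16 ≤ ℓ) : ℓ^(2*ℓ) < 2^(ℓ^2 - 2*ℓ + 4) := by
  have h4 := aux_pow4 ℓ h
  have hsq : 16 * ℓ ≤ ℓ^2 := by nlinarith
  have key : (ℓ^(2*ℓ))^4 < (2^(ℓ^2 - 2*ℓ + 4))^4 := by
    calc (ℓ^(2*ℓ))^4 = (ℓ^4)^(2*ℓ) := by rw [← pow_mul, ← pow_mul, Nat.mul_comm]
      _ ≤ (2^ℓ)^(2*ℓ) := Nat.pow_le_pow_left h4 _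
      _ = 2^(2*ℓ^2) := by rw [← pow_mul]; ring_nf
      _ < 2^(4*(ℓ^2 - 2*ℓ + 4)) := Nat.pow_lt_pow_right (by norm_num) (by omega)
      _ = (2^(ℓ^2 - 2*ℓ + 4))^4 := by rw [← pow_mul, Nat.mul_comm]
  exact lt_of_pow_lt_pow_left₀ 4 (Nat.zero_le _) key

theorem stmt_15 :
    ∃ M : ℕ, ∀ m : ℕ, M ≤ m → ∀ ℓ X : ℕ, 2 ≤ ℓ →
      ℓ ^ ℓ ≤ m → m < (ℓ + 1) ^ (ℓ + 1) → ℓ ^ 2 ≤ X →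
      Nat.choose X ℓ * Nat.choose (2 * m + ℓ - X) m <
        Nat.choose (2 * m - ℓ + 4) m := by
  use 16^16
  intro m hM ℓ X hℓ2 hℓm hmu hX
  have hℓ16 : 16 ≤ ℓ := by
    by_contra hc
    push_neg at hc
    have : (ℓ+1)^(ℓ+1) ≤ 16^16 :=
      calc (ℓ+1)^(ℓ+1) ≤ 16^(ℓ+1) := Nat.pow_le_pow_left (by omega) _
        _ ≤ 16^16 := Nat.pow_le_pow_right (by norm_num) (by omega)
    omega
  have hℓ2m : ℓ^2 ≤ m := le_trans (Nat.pow_le_pow_right (by omega) hℓ2) hℓm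
  have hℓsq : 2*ℓ ≤ ℓ^2 := by nlinarith
  have hℓm' : ℓ ≤ m := by nlinarith
  have hRHSpos : 0 < (2*m - ℓ + 4).choose m := Nat.choose_pos (by omega)
  rcases Nat.lt_or_ge (m + ℓ) X with hbig | hXle
  · have hz : (2*m + ℓ - X).choose m = 0 := Nat.choose_eq_zero_of_lt (by omega)
    rw [hz, mul_zero]
    exact hRHSpos
  · obtain ⟨i, rfl⟩ := Nat.exists_eq_add_of_le hX
    have hmono := aux_mono m ℓ hℓ2 i (by omega)
    have hN0 : m ≤ 2*m + ℓ - ℓ^2 := by omega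
    have hN0pos : 0 < (2*m + ℓ - ℓ^2).choose m := Nat.choose_pos (by omega)
    have hsum : (2*m + ℓ - ℓ^2) + (ℓ^2 - 2*ℓ + 4) = 2*m - ℓ + 4 := by omega
    have hdb := aux_doubles m (2*m + ℓ - ℓ^2) hN0 (ℓ^2 - 2*ℓ + 4) (by omega)
    rw [hsum] at hdb
    have hcb : (ℓ^2).choose ℓ ≤ ℓ^(2*ℓ) := by
      calc (ℓ^2).choose ℓ ≤ (ℓ^2)^ℓ := Nat.choose_le_pow _ _
        _ = ℓ^(2*ℓ) := by rw [← pow_mul]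
    have hexp := aux_exp ℓ hℓ16
    calc (ℓ^2 + i).choose ℓ * (2*m + ℓ - (ℓ^2+i)).choose m
        ≤ (ℓ^2).choose ℓ * (2*m + ℓ - ℓ^2).choose m := hmono
      _ ≤ ℓ^(2*ℓ) * (2*m + ℓ - ℓ^2).choose m := Nat.mul_le_mul_right _ hcb
      _ < 2^(ℓ^2 - 2*ℓ + 4) * (2*m + ℓ - ℓ^2).choose m :=
          (Nat.mul_lt_mul_right hN0pos).mpr hexp
      _ ≤ (2*m - ℓ + 4).choose m := hdb
end

section
/- If (A₁,B₁),…,(A_t,B_t) are pairs of sets with |A_i| = a, |B_i| = b, A_i ∩ B_j = ∅ iff i = j, and A_i ∩ A_j ≠ ∅ for all i, j, and additionally |A_i| ≤ |B_i| for all i with the A-sizes weakly increasing and B-sizes weakly decreasing, then t ≤ (1/2)·C(a+b, a). -/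
/-!
Put general-position vectors `v x ∈ ℝ^(a+b)` on the moment curve and let `x i`, `y i` be the
wedge products of the vectors of `A i` and of `B i`. Then `x i ∧ y j = 0` exactly when `i ≠ j`,
and `x i ∧ x j = 0` for all `i, j` because the `A i` pairwise intersect. The `y i` are independent
in `⋀^b`, and so are the `x i` in `⋀^a`; let `U` be the span of the `x i`. Every element of
`D = U ∧ ⋀^(b-a)` is killed by all `x i`, whereas a nonzero combination of the `y i` is not, so
`dim D + t ≤ dim ⋀^b = C(a+b, a)`. Finally `dim D ≥ dim U = t`: take `dim U` elements of `U` with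
distinct colex-least monomials `e_S`, and multiply each by `e_(F S \ S)`, where `F` is an injection
from `a`-sets to `b`-supersets (Hall's theorem); the colex-least monomials `e_(F S)` of the
products are again distinct.
-/

open Module Finset

namespace Module.Basis

variable {K W ι : Type*} [Field K] [AddCommGroup W] [Module K W] [LinearOrder ι] [Finite ι]

theorem exists_finset_isLeast_support (β : Basis ι K W) (U : Submodule K W) :
    ∃ L : Finset ι, finrank K U ≤ #L ∧
      ∀ i ∈ L, ∃ u ∈ U, IsLeast (↑(β.repr u).support : Set ι) i := by
  classical
  have := Fintype.ofFinite ι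
  let L := univ.filter fun i => ∃ u ∈ U, IsLeast (↑(β.repr u).support : Set ι) i
  refine ⟨L, ?_, fun i hi => (mem_filter.1 hi).2⟩
  let φ : U →ₗ[K] (L → K) := LinearMap.pi fun i => (Finsupp.lapply i.1) ∘ₗ β.repr ∘ₗ U.subtype
  have hφ : Function.Injective φ := by
    rw [← LinearMap.ker_eq_bot, Submodule.eq_bot_iff]
    intro u hu
    by_contra hne
    have hsupp : (β.repr u).support.Nonempty := by
      rw [Finsupp.support_nonempty_iff, Ne, LinearEquiv.map_eq_zero_iff]
      exact fun h => hne (Subtype.ext h)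
    have hmin := isLeast_min' _ hsupp
    have hL : (β.repr u).support.min' hsupp ∈ L := mem_filter.2 ⟨mem_univ _, u, u.2, hmin⟩
    exact Finsupp.mem_support_iff.1 hmin.1 (congrFun hu ⟨_, hL⟩)
  simpa using LinearMap.finrank_le_finrank_of_injective hφ

end Module.Basis

namespace Finset

variable {α : Type*} [Fintype α] [DecidableEq α]

theorem choose_le_card_superset {a b : ℕ} (hab : a ≤ b) (hn : a + b ≤ Fintype.card α)
    {S : Finset α} (hS : #S = a) :
    b.choose a ≤ #((powersetCard b univ).filter (S ⊆ ·)) := by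
  have hsub : ((univ \ S).powersetCard (b - a)).image (S ∪ ·) ⊆
      (powersetCard b univ).filter (S ⊆ ·) := by
    intro B hB
    obtain ⟨T, hT, rfl⟩ := mem_image.1 hB
    obtain ⟨hT, hTcard⟩ := mem_powersetCard.1 hT
    refine mem_filter.2 ⟨mem_powersetCard.2 ⟨subset_univ _, ?_⟩, subset_union_left⟩
    rw [card_union_of_disjoint (disjoint_of_subset_right hT disjoint_sdiff), hS, hTcard]
    omega
  have hinj : Set.InjOn (S ∪ ·) ((univ \ S).powersetCard (b - a)) := by
    intro T hT T' hT' h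
    rw [mem_coe, mem_powersetCard] at hT hT'
    have hd := disjoint_of_subset_right hT.1 disjoint_sdiff
    have hd' := disjoint_of_subset_right hT'.1 disjoint_sdiff
    simpa [union_sdiff_cancel_left hd, union_sdiff_cancel_left hd'] using
      congrArg (· \ S) h
  calc b.choose a = b.choose (b - a) := (Nat.choose_symm hab).symm
    _ ≤ (Fintype.card α - a).choose (b - a) := Nat.choose_le_choose _ (by omega)
    _ = #(((univ \ S).powersetCard (b - a)).image (S ∪ ·)) := by
      rw [card_image_of_injOn hinj, card_powersetCard, card_univ_sdiff, hS]
    _ ≤ _ := card_le_card hsub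

theorem exists_injOn_superset_card {a b : ℕ} (hab : a ≤ b) (hn : a + b ≤ Fintype.card α) :
    ∃ F : Finset α → Finset α, Set.InjOn F {S | #S = a} ∧
      ∀ S, #S = a → S ⊆ F S ∧ #(F S) = b := by
  let r : {S : Finset α // #S = a} → Finset (Finset α) :=
    fun S => (powersetCard b univ).filter (S.1 ⊆ ·)
  -- Hall's condition, by double counting the pairs `S ⊆ B`.
  have hall : ∀ s, #s ≤ #(s.biUnion r) := by
    intro s
    refine Nat.le_of_mul_le_mul_right (card_mul_le_card_mul (fun S B => S.1 ⊆ B) ?_ ?_)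
      (Nat.choose_pos hab)
    · intro S hS
      refine (choose_le_card_superset hab hn S.2).trans (card_le_card fun B hB => ?_)
      simp only [bipartiteAbove, mem_filter] at hB ⊢
      exact ⟨mem_biUnion.2 ⟨S, hS, mem_filter.2 hB⟩, hB.2⟩
    · intro B hB
      obtain ⟨S, -, hSB⟩ := mem_biUnion.1 hB
      have hBcard : #B = b := (mem_powersetCard.1 (mem_filter.1 hSB).1).2
      rw [← hBcard, ← card_powersetCard]
      refine card_le_card_of_injOn (·.1) (fun S hS => ?_) (fun _ _ _ _ => Subtype.ext)
      simp only [bipartiteBelow, coe_filter, Set.mem_ofPred_eq] at hS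
      exact mem_powersetCard.2 ⟨hS.2, S.2⟩
  obtain ⟨f, hf, hfr⟩ := (all_card_le_biUnion_card_iff_exists_injective r).1 hall
  refine ⟨fun S => if h : #S = a then f ⟨S, h⟩ else ∅, ?_, fun S hS => ?_⟩
  · intro S hS T hT hST
    simp only [Set.mem_ofPred_eq] at hS hT
    simp only [hS, hT, dite_true] at hST
    exact congrArg Subtype.val (hf hST)
  · have := hfr ⟨S, hS⟩
    simp only [r, mem_filter, mem_powersetCard] at this
    simp only [hS, dite_true]
    exact ⟨this.2, this.1.2⟩

end Finset

namespace ExteriorAlgebra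

section CommRing

variable {R M I : Type*} [CommRing R] [AddCommGroup M] [Module R M] [LinearOrder I]
  (e : Basis I R M)

theorem basis_mem_exteriorPower (S : Finset I) : e.ExteriorAlgebra S ∈ ⋀[R]^#S M := by
  rw [show e.ExteriorAlgebra S = _ from basis_eq_coe_basis e (Set.powersetCard.ofCard rfl)]
  exact Submodule.coe_mem _

theorem basis_mul_basis_of_disjoint {S T : Finset I} (h : Disjoint S T) :
    ∃ ε : ℤˣ, e.ExteriorAlgebra S * e.ExteriorAlgebra T = ε • e.ExteriorAlgebra (S ∪ T) := by
  have := basis_mul_of_disjoint e (m := #S) (n := #T) (Set.powersetCard.ofCard rfl)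
    (Set.powersetCard.ofCard rfl) h
  rw [show e.ExteriorAlgebra S * e.ExteriorAlgebra T = _ from this, ← disjUnion_eq_union S T h]
  exact ⟨_, rfl⟩

theorem basis_mul_basis_of_not_disjoint {S T : Finset I} (h : ¬Disjoint S T) :
    e.ExteriorAlgebra S * e.ExteriorAlgebra T = 0 :=
  basis_mul_of_not_disjoint e (Set.powersetCard.ofCard rfl) (Set.powersetCard.ofCard rfl) h

theorem card_eq_of_repr_ne_zero {k : ℕ} {x : ExteriorAlgebra R M} (hx : x ∈ ⋀[R]^k M)
    {S : Finset I} (hS : e.ExteriorAlgebra.repr x S ≠ 0) : #S = k := by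
  rw [← exteriorPower.ιMulti_family_span_fixedDegree_of_span R e.span_eq] at hx
  induction hx using Submodule.span_induction generalizing S with
  | mem y hy =>
    obtain ⟨s, rfl⟩ := hy
    rw [← basis_apply_powersetCard, Basis.repr_self, Finsupp.single_apply] at hS
    rw [← (ite_ne_right_iff.1 hS).1, Set.powersetCard.card_eq]
  | zero => simp at hS
  | add y z _ _ hy hz =>
    rw [map_add, Finsupp.add_apply] at hS
    by_cases hyS : e.ExteriorAlgebra.repr y S = 0
    · exact hz (by simpa [hyS] using hS)
    · exact hy hyS
  | smul c y _ hy =>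
    rw [map_smul, Finsupp.smul_apply] at hS
    exact hy (right_ne_zero_of_smul hS)

end CommRing

variable {K M : Type*} [Field K] [AddCommGroup M] [Module K M]

instance [FiniteDimensional K M] : FiniteDimensional K (ExteriorAlgebra K M) :=
  .of_basis (finBasis K M).ExteriorAlgebra

theorem ιMulti_ne_zero_of_linearIndependent {k : ℕ} {v : Fin k → M}
    (hv : LinearIndependent K v) : ιMulti K k v ≠ 0 := by
  have huniv : #(univ : Finset (Fin k)) = k := by simp
  -- `ιMulti_family` at `univ` enumerates `Fin k` increasingly, i.e. it is `ιMulti` itself.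
  have hid : (Set.powersetCard.ofFinEmbEquiv.symm (Set.powersetCard.ofCard huniv) : Fin k → Fin k)
      = id :=
    (congrArg DFunLike.coe (orderEmbOfFin_unique' huniv (f := RelEmbedding.refl (· ≤ ·))
      (by simp))).symm
  have := (exteriorPower.ιMulti_family_linearIndependent_field (n := k) hv).ne_zero
    (Set.powersetCard.ofCard huniv)
  contrapose! this
  apply Subtype.ext
  simpa [ExteriorAlgebra.ιMulti_family, hid] using this

section Basis

variable {I : Type*} [LinearOrder I] (e : Basis I K M)

theorem repr_basis_mul_basis_eq_zero {P T S : Finset I} (h : P ≠ S \ T) :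
    e.ExteriorAlgebra.repr (e.ExteriorAlgebra P * e.ExteriorAlgebra T) S = 0 := by
  by_cases hPT : Disjoint P T
  · obtain ⟨ε, hε⟩ := basis_mul_basis_of_disjoint e hPT
    have hS : P ∪ T ≠ S := by
      rintro rfl
      exact h (union_sdiff_cancel_right hPT).symm
    simp [hε, hS]
  · simp [basis_mul_basis_of_not_disjoint e hPT]

theorem repr_sdiff_mul_basis_ne_zero_iff {T S : Finset I} :
    e.ExteriorAlgebra.repr (e.ExteriorAlgebra (S \ T) * e.ExteriorAlgebra T) S ≠ 0 ↔ T ⊆ S := by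
  obtain ⟨ε, hε⟩ := basis_mul_basis_of_disjoint e (sdiff_disjoint : Disjoint (S \ T) T)
  rw [hε, sdiff_union_self_eq_union]
  rcases Int.units_eq_one_or ε with rfl | rfl <;> simp [Finsupp.single_apply, union_eq_left]

variable [Fintype I]

theorem repr_mul_basis_ne_zero_iff (x : ExteriorAlgebra K M) (T S : Finset I) :
    e.ExteriorAlgebra.repr (x * e.ExteriorAlgebra T) S ≠ 0 ↔
      T ⊆ S ∧ e.ExteriorAlgebra.repr x (S \ T) ≠ 0 := by
  set β := e.ExteriorAlgebra
  have hsum : β.repr (x * β T) S = ∑ P, β.repr x P * β.repr (β P * β T) S := by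
    calc β.repr (x * β T) S = β.repr ((∑ P, β.repr x P • β P) * β T) S := by rw [β.sum_repr]
      _ = _ := by
        simp only [sum_mul, smul_mul_assoc, map_sum, map_smul, Finsupp.finsetSum_apply,
          Finsupp.smul_apply, smul_eq_mul]
  rw [hsum, sum_eq_single (S \ T)
    (fun P _ hP => by rw [repr_basis_mul_basis_eq_zero e hP, mul_zero]) (by simp),
    mul_ne_zero_iff, repr_sdiff_mul_basis_ne_zero_iff, and_comm]

theorem linearIndependent_mul_basis_sdiff {L : Finset (Finset I)}
    {u : Finset I → ExteriorAlgebra K M} {F : Finset I → Finset I}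
    (hu : ∀ S ∈ L, e.ExteriorAlgebra.repr (u S) S ≠ 0 ∧
      ∀ P, e.ExteriorAlgebra.repr (u S) P ≠ 0 → toColex S ≤ toColex P)
    (hF : ∀ S ∈ L, S ⊆ F S) (hFinj : Set.InjOn F L) :
    LinearIndependent K fun S : L => u S * e.ExteriorAlgebra (F S \ S) := by
  classical
  set β := e.ExteriorAlgebra
  rw [Fintype.linearIndependent_iff]
  intro g hg
  by_contra! hne
  obtain ⟨S₀, hS₀, hmin⟩ := (univ.filter (g · ≠ 0)).exists_min_image
    (fun S : L => toColex (F S)) (by simpa [filter_nonempty_iff] using hne)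
  have hcoef := congrArg (fun x => β.repr x (F S₀)) hg
  simp only [map_sum, map_smul, Finsupp.finsetSum_apply, Finsupp.smul_apply, smul_eq_mul,
    map_zero, Finsupp.coe_zero, Pi.zero_apply] at hcoef
  rw [sum_eq_single S₀ ?_ (by simp)] at hcoef
  · refine mul_ne_zero (mem_filter.1 hS₀).2 ?_ hcoef
    rw [repr_mul_basis_ne_zero_iff, Finset.sdiff_sdiff_eq_self (hF _ S₀.2)]
    exact ⟨sdiff_subset, (hu _ S₀.2).1⟩
  intro S _ hS
  by_cases hgS : g S = 0
  · rw [hgS, zero_mul]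
  by_contra h
  obtain ⟨hsub, hrepr⟩ := (repr_mul_basis_ne_zero_iff e _ _ _).1 (right_ne_zero_of_mul h)
  -- `S ↦ S ∪ T` is colex-monotone, so the colex-least monomial of `u S * e_T` is `e_(F S)`.
  have hle : toColex (F S \ (F S \ S)) ≤ toColex (F S₀ \ (F S \ S)) := by
    rw [Finset.sdiff_sdiff_eq_self (hF _ S.2)]
    exact (hu _ S.2).2 _ hrepr
  rw [Colex.toColex_sdiff_le_toColex_sdiff sdiff_subset hsub] at hle
  have hFS := hle.antisymm (hmin S (mem_filter.2 ⟨mem_univ _, hgS⟩))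
  exact hS (Subtype.ext (hFinj S.2 S₀.2 (toColex_inj.1 hFS)))

end Basis

theorem finrank_le_finrank_mul_exteriorPower [FiniteDimensional K M] {a b : ℕ} (hab : a ≤ b)
    (hn : a + b ≤ finrank K M) {U : Submodule K (ExteriorAlgebra K M)} (hU : U ≤ ⋀[K]^a M) :
    finrank K U ≤ finrank K ↥(U * ⋀[K]^(b - a) M) := by
  let e := finBasis K M
  let β := e.ExteriorAlgebra
  have : Finite (Colex (Finset (Fin (finrank K M)))) := .of_equiv _ toColex
  obtain ⟨L, hL, hlead⟩ := (β.reindex toColex).exists_finset_isLeast_support U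
  choose! u huU hu using hlead
  obtain ⟨F, hFinj, hF⟩ := exists_injOn_superset_card (α := Fin (finrank K M)) hab (by simpa)
  let L' := L.map ofColex.toEmbedding
  have hmemL' {S} : S ∈ L' ↔ toColex S ∈ L := by simp [L']
  have hu' : ∀ S ∈ L', β.repr (u (toColex S)) S ≠ 0 ∧
      ∀ P, β.repr (u (toColex S)) P ≠ 0 → toColex S ≤ toColex P := by
    intro S hS
    obtain ⟨hmem, hlow⟩ := hu _ (hmemL'.1 hS)
    refine ⟨by simpa [Basis.repr_reindex_apply] using hmem, fun P hP => hlow ?_⟩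
    simpa [Basis.repr_reindex_apply] using hP
  have hcard : ∀ S ∈ L', #S = a := fun S hS =>
    card_eq_of_repr_ne_zero e (hU (huU _ (hmemL'.1 hS))) (hu' S hS).1
  have hind := linearIndependent_mul_basis_sdiff e hu' (fun S hS => (hF S (hcard S hS)).1)
    (hFinj.mono fun S hS => hcard S hS)
  calc finrank K U ≤ #L' := by simpa [L'] using hL
    _ = finrank K (Submodule.span K (Set.range fun S : L' =>
          u (toColex S.1) * β (F S \ S))) := by
      rw [finrank_span_eq_card hind, Fintype.card_coe]
    _ ≤ _ := by
      refine Submodule.finrank_mono (Submodule.span_le.2 ?_)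
      rintro _ ⟨S, rfl⟩
      obtain ⟨hsub, hFcard⟩ := hF S (hcard S S.2)
      have hT : #(F S \ S) = b - a := by rw [card_sdiff_of_subset hsub, hFcard, hcard S S.2]
      exact Submodule.mul_mem_mul (huU _ (hmemL'.1 S.2)) (hT ▸ basis_mem_exteriorPower e _)

end ExteriorAlgebra

section Pairing

variable {K A ι : Type*} [Field K] [Ring A] [Algebra K A] [Fintype ι]
  {x y : ι → A}

theorem mul_sum_smul_of_mul_eq_zero (hoff : ∀ i j, i ≠ j → x i * y j = 0) (c : ι → K) (i : ι) :
    x i * ∑ j, c j • y j = c i • (x i * y i) := by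
  rw [mul_sum, sum_eq_single i (fun j _ hj => by rw [mul_smul_comm, hoff i j hj.symm, smul_zero])
    (by simp), mul_smul_comm]

theorem sum_smul_mul_of_mul_eq_zero (hoff : ∀ i j, i ≠ j → x i * y j = 0) (c : ι → K) (j : ι) :
    (∑ i, c i • x i) * y j = c j • (x j * y j) := by
  rw [sum_mul, sum_eq_single j (fun i _ hi => by rw [smul_mul_assoc, hoff i j hi, smul_zero])
    (by simp), smul_mul_assoc]

theorem linearIndependent_left_of_mul_eq_zero (hoff : ∀ i j, i ≠ j → x i * y j = 0)
    (hdiag : ∀ i, x i * y i ≠ 0) : LinearIndependent K x :=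
  Fintype.linearIndependent_iff.2 fun c hc j => by
    simpa [sum_smul_mul_of_mul_eq_zero hoff, hdiag j] using congrArg (· * y j) hc

theorem eq_zero_of_mem_span_of_mul_eq_zero (hoff : ∀ i j, i ≠ j → x i * y j = 0)
    (hdiag : ∀ i, x i * y i ≠ 0) {z : A} (hz : z ∈ Submodule.span K (Set.range y))
    (hxz : ∀ i, x i * z = 0) : z = 0 := by
  obtain ⟨c, rfl⟩ := (Submodule.mem_span_range_iff_exists_fun K).1 hz
  have hc : c = 0 := funext fun i => by
    simpa [mul_sum_smul_of_mul_eq_zero hoff, hdiag i] using hxz i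
  simp [hc]

theorem linearIndependent_right_of_mul_eq_zero (hoff : ∀ i j, i ≠ j → x i * y j = 0)
    (hdiag : ∀ i, x i * y i ≠ 0) : LinearIndependent K y :=
  Fintype.linearIndependent_iff.2 fun c hc i => by
    simpa [mul_sum_smul_of_mul_eq_zero hoff, hdiag i] using congrArg (x i * ·) hc

end Pairing

namespace ExteriorAlgebra

variable {K M : Type*} [Field K] [AddCommGroup M] [Module K M]

theorem two_mul_card_le_choose [FiniteDimensional K M] {ι : Type*} [Fintype ι] {a b : ℕ}
    (hab : a ≤ b) (hn : finrank K M = a + b) {x y : ι → ExteriorAlgebra K M}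
    (hx : ∀ i, x i ∈ ⋀[K]^a M) (hy : ∀ i, y i ∈ ⋀[K]^b M) (hxx : ∀ i j, x i * x j = 0)
    (hxy : ∀ i j, x i * y j = 0 ↔ i ≠ j) :
    2 * Fintype.card ι ≤ (a + b).choose a := by
  have hoff : ∀ i j, i ≠ j → x i * y j = 0 := fun i j => (hxy i j).2
  have hdiag : ∀ i, x i * y i ≠ 0 := fun i h => (hxy i i).1 h rfl
  let U := Submodule.span K (Set.range x)
  let Y := Submodule.span K (Set.range y)
  let D := U * ⋀[K]^(b - a) M
  have hU : U ≤ ⋀[K]^a M := Submodule.span_le.2 (Set.range_subset_iff.2 hx)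
  have hY : Y ≤ ⋀[K]^b M := Submodule.span_le.2 (Set.range_subset_iff.2 hy)
  have hD : D ≤ ⋀[K]^b M := by
    have := mul_le_mul_left hU (⋀[K]^(b - a) M)
    rwa [exteriorPower, exteriorPower, ← pow_add, Nat.add_sub_cancel' hab] at this
  have hxD : ∀ i, ∀ d ∈ D, x i * d = 0 := by
    intro i d hd
    have hxU : U ≤ LinearMap.ker (LinearMap.mulLeft K (x i)) :=
      Submodule.span_le.2 (Set.range_subset_iff.2 fun j => hxx i j)
    refine Submodule.mul_induction_on hd (fun u hu w _ => ?_) (fun _ _ h₁ h₂ => ?_)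
    · rw [← mul_assoc, show x i * u = 0 from hxU hu, zero_mul]
    · rw [mul_add, h₁, h₂, add_zero]
  have hYD : Y ⊓ D = ⊥ := (Submodule.eq_bot_iff _).2 fun z hz =>
    eq_zero_of_mem_span_of_mul_eq_zero hoff hdiag hz.1 fun i => hxD i z hz.2
  have hUD : finrank K U ≤ finrank K D := finrank_le_finrank_mul_exteriorPower hab hn.ge hU
  have hsum := Submodule.finrank_sup_add_finrank_inf_eq Y D
  rw [hYD, finrank_bot, add_zero] at hsum
  have hle : finrank K ↥(Y ⊔ D) ≤ finrank K (⋀[K]^b M) := Submodule.finrank_mono (sup_le hY hD)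
  rw [finrank_span_eq_card (linearIndependent_left_of_mul_eq_zero hoff hdiag)] at hUD
  rw [finrank_span_eq_card (linearIndependent_right_of_mul_eq_zero hoff hdiag)] at hsum
  rw [exteriorPower.finrank_eq, hn, ← Nat.choose_symm_add] at hle
  omega

end ExteriorAlgebra

namespace ExteriorAlgebra

variable (R : Type*) {M α : Type*} [CommRing R] [AddCommGroup M] [Module R M]

/-- The wedge product of the vectors `v x`, `x ∈ s`, taken in an arbitrary order, so that it is
only determined up to sign. -/
noncomputable def ιMultiFinset (v : α → M) (s : Finset α) : ExteriorAlgebra R M :=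
  ιMulti R #s fun i => v (s.equivFin.symm i)

variable {R}

theorem ιMultiFinset_mem (v : α → M) (s : Finset α) : ιMultiFinset R v s ∈ ⋀[R]^#s M :=
  ιMulti_range R _ ⟨_, rfl⟩

theorem ιMultiFinset_mul_of_not_disjoint (v : α → M) {s t : Finset α} (h : ¬Disjoint s t) :
    ιMultiFinset R v s * ιMultiFinset R v t = 0 := by
  obtain ⟨x, hxs, hxt⟩ := not_disjoint_iff.1 h
  rw [ιMultiFinset, ιMultiFinset, ιMulti_mul_ιMulti]
  refine AlternatingMap.map_eq_zero_of_eq _ _ (i := Fin.castAdd _ (s.equivFin ⟨x, hxs⟩))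
    (j := Fin.natAdd _ (t.equivFin ⟨x, hxt⟩)) (by simp) ?_
  intro heq
  have := congrArg Fin.val heq
  simp only [Fin.val_castAdd, Fin.val_natAdd] at this
  omega

theorem ιMultiFinset_mul_ne_zero {K : Type*} [Field K] [Module K M] [DecidableEq α] (v : α → M)
    {s t : Finset α} (h : Disjoint s t) (hv : LinearIndependent K fun x : ↥(s ∪ t) => v x) :
    ιMultiFinset K v s * ιMultiFinset K v t ≠ 0 := by
  rw [ιMultiFinset, ιMultiFinset, ιMulti_mul_ιMulti]
  apply ιMulti_ne_zero_of_linearIndependent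
  let φ : Fin (#s + #t) → ↥(s ∪ t) :=
    Fin.append (fun i => ⟨s.equivFin.symm i, mem_union_left _ (coe_mem _)⟩)
      (fun j => ⟨t.equivFin.symm j, mem_union_right _ (coe_mem _)⟩)
  have hφ : Function.Injective φ := by
    refine Fin.append_injective_iff.2 ⟨fun i i' hii' => ?_, fun j j' hjj' => ?_, fun i j hij => ?_⟩
    · have := congrArg Subtype.val hii'
      exact s.equivFin.symm.injective (Subtype.ext this)
    · have := congrArg Subtype.val hjj'
      exact t.equivFin.symm.injective (Subtype.ext this)
    · have := congrArg Subtype.val hij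
      exact disjoint_left.1 h (s.equivFin.symm i).2 (this ▸ (t.equivFin.symm j).2)
  have hcomp : Fin.append (fun i => v (s.equivFin.symm i)) (fun j => v (t.equivFin.symm j)) =
      (fun x : ↥(s ∪ t) => v x) ∘ φ := by
    ext k
    refine Fin.addCases (fun i => ?_) (fun j => ?_) k <;> simp [φ]
  rw [hcomp]
  exact hv.comp φ hφ

end ExteriorAlgebra

open ExteriorAlgebra

theorem linearIndependent_pow_of_injOn {K α : Type*} [Field K] {n : ℕ} {c : α → K}
    {s : Finset α} (hc : Set.InjOn c s) (hs : #s = n) :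
    LinearIndependent K fun x : s => fun j : Fin n => c x ^ (j : ℕ) := by
  let e := s.equivFinOfCardEq hs
  rw [← linearIndependent_equiv e.symm]
  have hinj : Function.Injective fun k => c (e.symm k) := fun k k' hkk' =>
    e.symm.injective (Subtype.ext (hc (coe_mem _) (coe_mem _) hkk'))
  exact Matrix.linearIndependent_rows_of_det_ne_zero (Matrix.det_vandermonde_ne_zero_iff.2 hinj)

theorem stmt_16 {α : Type*} [DecidableEq α] (t a b : ℕ) (hab : a ≤ b)
    (A B : Fin t → Finset α)
    (hA : ∀ i, (A i).card = a) (hB : ∀ i, (B i).card = b)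
    (h : ∀ i j, A i ∩ B j = ∅ ↔ i = j)
    (hint : ∀ i j, (A i ∩ A j).Nonempty) :
    (t : ℝ) ≤ (1 / 2) * Nat.choose (a + b) a := by
  let ground := univ.biUnion fun i => A i ∪ B i
  obtain ⟨f, hf⟩ := Set.countable_iff_exists_injOn.1 ground.countable_toSet
  let v : α → Fin (a + b) → ℝ := fun x j => (f x : ℝ) ^ (j : ℕ)
  have hdisj : ∀ i j, Disjoint (A i) (B j) ↔ i = j := by
    simpa [disjoint_iff_inter_eq_empty] using h
  have hv : ∀ i, LinearIndependent ℝ fun x : ↥(A i ∪ B i) => v x := fun i =>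
    linearIndependent_pow_of_injOn
      (Nat.cast_injective.comp_injOn (hf.mono (subset_biUnion_of_mem _ (mem_univ i))))
      (by rw [card_union_of_disjoint ((hdisj i i).2 rfl), hA, hB])
  have hx : ∀ i, ιMultiFinset ℝ v (A i) ∈ ⋀[ℝ]^a (Fin (a + b) → ℝ) := fun i => by
    simpa [hA i] using ιMultiFinset_mem (R := ℝ) v (A i)
  have hy : ∀ i, ιMultiFinset ℝ v (B i) ∈ ⋀[ℝ]^b (Fin (a + b) → ℝ) := fun i => by
    simpa [hB i] using ιMultiFinset_mem (R := ℝ) v (B i)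
  have key := two_mul_card_le_choose hab (finrank_fin_fun ℝ) hx hy
    (fun i j => ιMultiFinset_mul_of_not_disjoint v (not_disjoint_iff_nonempty_inter.2 (hint i j)))
    (fun i j => ⟨fun h0 hij => ιMultiFinset_mul_ne_zero v ((hdisj i j).2 hij) (hij ▸ hv i) h0,
      fun hij => ιMultiFinset_mul_of_not_disjoint v (mt (hdisj i j).1 hij)⟩)
  rw [Fintype.card_fin] at key
  have : (2 * t : ℝ) ≤ (a + b).choose a := by exact_mod_cast key
  linarith
end

section
/- In the house allocation setting with m buyers, if buyers i₁,…,i_{k+1} all have identical first k preferences and also share the same (k+1)-st preference, then for every Pareto optimal matching τ, the house ranked (k+1)-st by these buyers belongs to s(τ). -/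
/-- House allocation: buyer `i`'s preference list is the injective sequence
`pref i`, `τ` is an injective matching with `τ i = pref i (r i)`, and
1-Pareto optimality says every house a buyer prefers to their own is taken.
If `k+1` buyers share their first `k+1` preferences, the common `(k+1)`-st
house is sold in every Pareto optimal matching. -/
theorem stmt_17 {B : Type*} (m k : ℕ) (pref : Fin m → ℕ → B)
    (hpref : ∀ i, Function.Injective (pref i))
    (g : Fin (k + 1) → Fin m) (hg : Function.Injective g)
    (hsame : ∀ s t : Fin (k + 1), ∀ n ≤ k, pref (g s) n = pref (g t) n)
    (τ : Fin m → B) (hτ : Function.Injective τ)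
    (r : Fin m → ℕ) (hr : ∀ i, τ i = pref i (r i))
    (hPOM : ∀ i, ∀ n < r i, pref i n ∈ Set.range τ) :
    pref (g 0) k ∈ Set.range τ := by
  have hex : ∃ s : Fin (k + 1), k ≤ r (g s) := by
    by_contra h
    push_neg at h
    set f : Fin (k + 1) → Fin k := fun s => ⟨r (g s), h s⟩ with hf
    have hfinj : Function.Injective f := by
      intro s t hst
      have hrst : r (g s) = r (g t) := congrArg Fin.val hst
      have : τ (g s) = τ (g t) := by
        rw [hr, hr, hrst, hsame s t (r (g t)) (le_of_lt (h t))]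
      exact hg (hτ this)
    have := Fintype.card_le_of_injective f hfinj
    simp at this
  obtain ⟨s, hs⟩ := hex
  have hk : pref (g s) k = pref (g 0) k := hsame s 0 k le_rfl
  rcases eq_or_lt_of_le hs with heq | hlt
  · exact ⟨g s, by rw [hr, ← heq, hk]⟩
  · rw [← hk]; exact hPOM (g s) k hlt
end
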